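/- (Coexistence for the limiting dynamical system.) Assume 1 < \varphi_1 < \varphi_2, \varphi_2 > 2\log 2 and \varphi_1 \sigma > 1. Then for every p \in (0,1)^2 with p_1 + p_2 \le 1 one has \liminf_{k\to\infty} h^k_i(p) > 0 for both i = 1 and i = 2. -/

import Mathlib

/-- `g α x` : the expected density after the epidemic stage on a percolated 3-tree. -/
noncomputable def g (α x : ℝ) : ℝ :=
  if x = 0 then 0
  else (1 - Real.sqrt (1 - 4 * (1 - α) * x * (1 - x))) ^ 3 / (8 * (1 - α) ^ 2 * x ^ 2)

/-- `ψ(x) = (1 - e^{-x})/x`, with `ψ(0) = 1`. -/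
noncomputable def psi (x : ℝ) : ℝ := if x = 0 then 1 else (1 - Real.exp (-x)) / x

/-- `Σ_p = β₁ p₁ + β₂ p₂`. -/
noncomputable def Sig (β₁ β₂ : ℝ) (p : ℝ × ℝ) : ℝ := β₁ * p.1 + β₂ * p.2

/-- Growth map, first type. -/
noncomputable def f1 (β₁ β₂ : ℝ) (p : ℝ × ℝ) : ℝ :=
  if Sig β₁ β₂ p = 0 then 0
  else (1 - Real.exp (-Sig β₁ β₂ p)) * (β₁ * p.1) / Sig β₁ β₂ p

/-- Growth map, second type. -/
noncomputable def f2 (β₁ β₂ : ℝ) (p : ℝ × ℝ) : ℝ :=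
  if Sig β₁ β₂ p = 0 then 0
  else (1 - Real.exp (-Sig β₁ β₂ p)) * (β₂ * p.2) / Sig β₁ β₂ p

/-- The two-type limiting map. -/
noncomputable def hmap (α₁ α₂ β₁ β₂ : ℝ) (p : ℝ × ℝ) : ℝ × ℝ :=
  (g α₁ (f1 β₁ β₂ p), g α₂ (f2 β₁ β₂ p))

/-- `pbar α = sup_{x ∈ [0,1]} g α x`. -/
noncomputable def pbar (α : ℝ) : ℝ := sSup (g α '' Set.Icc 0 1)

/-- The one-type map for the strong species alone: `t(x) = g_{α₂}(1 - e^{-β₂ x})`. -/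
noncomputable def tmap (α₂ β₂ : ℝ) (x : ℝ) : ℝ := g α₂ (1 - Real.exp (-(β₂ * x)))

/-- `σ = inf_{x ∈ [0,p̄₂]} liminf_n (∏_{k<n} ψ(β₂ tᵏ(x)))^{1/n}`. -/
noncomputable def sigma (α₂ β₂ : ℝ) : ℝ :=
  sInf ((fun x => Filter.liminf
      (fun n : ℕ => (∏ k ∈ Finset.range n, psi (β₂ * (tmap α₂ β₂)^[k] x)) ^ (1 / (n : ℝ)))
      Filter.atTop) '' Set.Icc 0 (pbar α₂))

/-!
Write `(aₖ, bₖ)` for the orbit and `φᵢ = (1 - αᵢ) βᵢ`. Each step satisfies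
`aₖ₊₁ ≥ φ₁ (ψ(β₂ bₖ) - 4 β₁ aₖ) aₖ` and symmetrically for `b`, and both coordinates lose at most a
fixed factor per step.

After one step `β₁ a ≤ φ₁ / 2 < φ₂ / 2`, so while `b` is small it is multiplied by almost
`φ₂ ψ(φ₂ / 2) = 2 (1 - e^{-φ₂/2}) > 1`: `b` is repelled from `0`.

While `a` is small, `b` follows the one-type map `t` up to a small error, so over `n` steps `a`
is multiplied by almost `φ₁ⁿ ∏_{k<n} ψ(β₂ tᵏ(b))`. Since `φ₁ σ > 1`, every `b ∈ [0, p̄₂]` has a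
block length over which this factor exceeds `1`, and by compactness these lengths are bounded.
So `a` returns above a fixed level within a bounded number of steps, and never falls far below it
in between.
-/

open Set Filter Topology Real

lemma IsCompact.exists_forall_exists_le_lt {X : Type*} [TopologicalSpace X] {K : Set X}
    (hK : IsCompact K) {P : ℕ → X → ℝ} {c : ℕ → ℝ} (hP : ∀ n, ContinuousOn (P n) K)
    (h : ∀ x ∈ K, ∃ n, c n < P n x) : ∃ N, ∀ x ∈ K, ∃ n ≤ N, c n < P n x := by
  choose n hn using h
  obtain ⟨t, ht⟩ := hK.elim_nhdsWithin_subcover' (fun x hx => {y | c (n x hx) < P (n x hx) y})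
    fun x hx => (hP _ x hx).eventually_const_lt (hn x hx)
  refine ⟨t.sup fun x => n x x.2, fun y hy => ?_⟩
  obtain ⟨x, hxt, hyx⟩ := mem_iUnion₂.1 (ht hy)
  exact ⟨n x x.2, Finset.le_sup (f := fun x : K => n x x.2) hxt, hyx⟩

lemma exists_pow_lt_of_lt_liminf_rpow {u : ℕ → ℝ} {θ : ℝ} (hu : ∀ n, 0 ≤ u n) (hθ : 0 ≤ θ)
    (h : θ < liminf (fun n : ℕ => u n ^ (1 / (n : ℝ))) atTop) : ∃ n, θ ^ (n + 1) < u (n + 1) := by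
  obtain ⟨n, hn⟩ := (eventually_lt_of_lt_liminf h
    (isBoundedUnder_of ⟨0, fun n => rpow_nonneg (hu n) _⟩)).exists_forall_of_atTop
  refine ⟨n, ?_⟩
  have := pow_lt_pow_left₀ (hn (n + 1) n.le_succ) hθ n.succ_ne_zero
  rwa [one_div, rpow_inv_natCast_pow (hu _) n.succ_ne_zero] at this

lemma UniformContinuousOn.exists_dist_iterate_lt {X : Type*} [PseudoMetricSpace X] {T : X → X}
    {s : Set X} (hT : UniformContinuousOn T s) (hs : MapsTo T s s) (n : ℕ) {ε : ℝ}
    (hε : 0 < ε) : ∃ δ > 0, ∀ x : ℕ → X, (∀ j, x j ∈ s) → ∀ m ≤ n,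
      (∀ j < m, dist (x (j + 1)) (T (x j)) < δ) → dist (x m) (T^[m] (x 0)) < ε := by
  induction n generalizing ε with
  | zero => exact ⟨1, one_pos, fun x _ m hm _ => by simpa [Nat.le_zero.1 hm] using hε⟩
  | succ n ih =>
    obtain ⟨δT, hδT, hT'⟩ := Metric.uniformContinuousOn_iff.1 hT (ε / 2) (half_pos hε)
    obtain ⟨δ, hδ, hshadow⟩ := ih (lt_min hε hδT)
    refine ⟨min δ (ε / 2), lt_min hδ (half_pos hε), fun x hx m hm hstep => ?_⟩
    have hstep' : ∀ j < m, dist (x (j + 1)) (T (x j)) < δ := fun j hj =>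
      (hstep j hj).trans_le (min_le_left _ _)
    rcases hm.lt_or_eq with hm | rfl
    · exact (hshadow x hx m (by omega) hstep').trans_le (min_le_left _ _)
    · have hclose := (hshadow x hx n le_rfl fun j hj => hstep' j (by omega)).trans_le
        (min_le_right _ _)
      calc dist (x (n + 1)) (T^[n + 1] (x 0))
          ≤ dist (x (n + 1)) (T (x n)) + dist (T (x n)) (T (T^[n] (x 0))) := by
            rw [Function.iterate_succ_apply']; exact dist_triangle _ _ _
        _ < ε / 2 + ε / 2 :=
            add_lt_add ((hstep n n.lt_succ_self).trans_le (min_le_right _ _))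
              (hT' _ (hx n) _ (hs.iterate n (hx 0)) hclose)
        _ = ε := add_halves ε

section sequences

variable {u : ℕ → ℝ} {r : ℝ}

lemma pow_mul_le_of_mul_le_succ (hr : 0 ≤ r) (hu : ∀ k, r * u k ≤ u (k + 1)) (k j : ℕ) :
    r ^ j * u k ≤ u (k + j) := by
  induction j with
  | zero => simp
  | succ j ih =>
    calc r ^ (j + 1) * u k = r * (r ^ j * u k) := by ring
      _ ≤ r * u (k + j) := mul_le_mul_of_nonneg_left ih hr
      _ ≤ u (k + (j + 1)) := hu _

lemma mul_prod_le_of_mul_le_succ {w : ℕ → ℝ} {n : ℕ} (hw : ∀ j < n, 0 ≤ w j)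
    (hu : ∀ j < n, w j * u j ≤ u (j + 1)) : u 0 * ∏ j ∈ Finset.range n, w j ≤ u n := by
  induction n with
  | zero => simp
  | succ n ih =>
    rw [Finset.prod_range_succ, ← mul_assoc]
    calc u 0 * (∏ j ∈ Finset.range n, w j) * w n ≤ u n * w n :=
          mul_le_mul_of_nonneg_right (ih (fun j hj => hw j (by omega))
            fun j hj => hu j (by omega)) (hw n n.lt_succ_self)
      _ ≤ u (n + 1) := by rw [mul_comm]; exact hu n n.lt_succ_self

lemma min_le_of_le_succ_of_mul_le_succ {δ : ℝ} (hr : 0 ≤ r)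
    (hgrow : ∀ k, u k ≤ δ → u k ≤ u (k + 1)) (hu : ∀ k, r * u k ≤ u (k + 1)) (k : ℕ) :
    min (u 0) (r * δ) ≤ u k := by
  induction k with
  | zero => exact min_le_left _ _
  | succ k ih =>
    rcases le_or_gt (u k) δ with hk | hk
    · exact ih.trans (hgrow k hk)
    · exact (min_le_right _ _).trans
        ((mul_le_mul_of_nonneg_left hk.le hr).trans (hu k))

lemma pow_mul_le_of_forall_exists_le {m : ℝ} {N : ℕ} (hr0 : 0 ≤ r) (hr1 : r ≤ 1) (hm : 0 ≤ m)
    (hu : ∀ k, r * u k ≤ u (k + 1))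
    (hret : ∀ k, m ≤ u k → ∃ n, 0 < n ∧ n ≤ N ∧ m ≤ u (k + n)) (h0 : m ≤ u 0) (k : ℕ) :
    r ^ N * m ≤ u k := by
  suffices ∀ d k, m ≤ u k → r ^ N * m ≤ u (k + d) by simpa using this k 0 h0
  intro d
  induction d using Nat.strong_induction_on with
  | _ d ih =>
    intro k hk
    obtain ⟨n, hn0, hnN, hkn⟩ := hret k hk
    rcases lt_or_ge d n with hdn | hdn
    · calc r ^ N * m ≤ r ^ d * u k :=
            mul_le_mul (pow_le_pow_of_le_one hr0 hr1 (by omega)) hk hm (pow_nonneg hr0 _)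
        _ ≤ u (k + d) := pow_mul_le_of_mul_le_succ hr0 hu k d
    · have := ih (d - n) (by omega) (k + n) hkn
      rwa [add_assoc, Nat.add_sub_cancel' hdn] at this

lemma liminf_pos_of_le_succ {B c : ℝ} (hc : 0 < c) (hB : ∀ k, u k ≤ B)
    (h : ∀ k, c ≤ u (k + 1)) : 0 < liminf u atTop :=
  hc.trans_le <| le_liminf_of_le (isBoundedUnder_of ⟨B, hB⟩).isCoboundedUnder_ge
    (eventually_atTop.2 ⟨1, fun k hk => by simpa [Nat.sub_add_cancel hk] using h (k - 1)⟩)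

end sequences

lemma mul_psi (x : ℝ) : x * psi x = 1 - exp (-x) := by
  by_cases hx : x = 0
  · simp [hx]
  · rw [psi, if_neg hx]; field_simp

lemma psi_of_pos {x : ℝ} (hx : 0 < x) : psi x = (1 - exp (-x)) / x := by
  rw [eq_div_iff hx.ne', mul_comm, mul_psi]

/- `ψ(a + b)` is the mean of `ψ(a)` and `e^{-a} ψ(b)` with weights `a` and `b`; with
`e^{-x} ≤ ψ(x) ≤ 1` this gives both the monotonicity and the Lipschitz bound of `ψ`. -/
lemma add_mul_psi_add (a b : ℝ) :
    (a + b) * psi (a + b) = a * psi a + exp (-a) * (b * psi b) := by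
  rw [mul_psi, mul_psi, mul_psi, neg_add, exp_add]; ring

lemma psi_le_one {x : ℝ} (hx : 0 ≤ x) : psi x ≤ 1 := by
  rcases hx.eq_or_lt with rfl | hx
  · simp [psi]
  · rw [psi_of_pos hx, div_le_one hx]
    linarith [add_one_le_exp (-x)]

lemma exp_neg_le_psi {x : ℝ} (hx : 0 ≤ x) : exp (-x) ≤ psi x := by
  rcases hx.eq_or_lt with rfl | hx
  · simp [psi]
  · rw [psi_of_pos hx, le_div_iff₀ hx]
    have h := mul_le_mul_of_nonneg_left (add_one_le_exp x) (exp_nonneg (-x))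
    rw [← exp_add, neg_add_cancel, exp_zero] at h
    linarith

lemma psi_pos {x : ℝ} (hx : 0 ≤ x) : 0 < psi x :=
  (exp_pos _).trans_le (exp_neg_le_psi hx)

lemma psi_add_le {a b : ℝ} (ha : 0 ≤ a) (hb : 0 ≤ b) : psi (a + b) ≤ psi a := by
  rcases (add_nonneg ha hb).eq_or_lt with hab | hab
  · obtain ⟨rfl, rfl⟩ := (add_eq_zero_iff_of_nonneg ha hb).1 hab.symm; simp
  · have hmean := add_mul_psi_add a b
    have : exp (-a) * psi b ≤ psi a :=
      (mul_le_of_le_one_right (exp_nonneg _) (psi_le_one hb)).trans (exp_neg_le_psi ha)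
    nlinarith [mul_le_mul_of_nonneg_left this hb]

lemma psi_antitoneOn : AntitoneOn psi (Ici 0) := fun a ha b _ hab => by
  simpa using psi_add_le ha (sub_nonneg.2 hab)

lemma psi_le_psi_add_add {a b : ℝ} (ha : 0 ≤ a) (hb : 0 ≤ b) : psi a ≤ psi (a + b) + b := by
  rcases (add_nonneg ha hb).eq_or_lt with hab | hab
  · obtain ⟨rfl, rfl⟩ := (add_eq_zero_iff_of_nonneg ha hb).1 hab.symm; simp
  · have hmean := add_mul_psi_add a b
    have h : 1 - (a + b) ≤ exp (-a) * psi b := by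
      have := mul_le_mul_of_nonneg_left (exp_neg_le_psi hb) (exp_nonneg (-a))
      rw [← exp_add] at this
      linarith [add_one_le_exp (-a + -b)]
    nlinarith [mul_le_mul_of_nonneg_left h hb, psi_le_one ha]

lemma abs_psi_sub_psi_le {x y : ℝ} (hx : 0 ≤ x) (hy : 0 ≤ y) : |psi x - psi y| ≤ |x - y| := by
  wlog hxy : x ≤ y generalizing x y
  · rw [abs_sub_comm, abs_sub_comm x]; exact this hy hx (le_of_not_ge hxy)
  obtain ⟨d, hd, rfl⟩ : ∃ d, 0 ≤ d ∧ y = x + d := ⟨y - x, by linarith, by ring⟩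
  rw [abs_of_nonneg (sub_nonneg.2 (psi_add_le hx hd)), show x - (x + d) = -d by ring, abs_neg,
    abs_of_nonneg hd]
  linarith [psi_le_psi_add_add hx hd]

lemma lipschitzOnWith_psi : LipschitzOnWith 1 psi (Ici 0) :=
  LipschitzOnWith.of_dist_le_mul fun x hx y hy => by
    simpa [Real.dist_eq] using abs_psi_sub_psi_le hx hy

lemma g_zero (α : ℝ) : g α 0 = 0 := by simp [g]

section g

variable {α x : ℝ}

/- With `s = √(1 - 4(1-α)x(1-x))`, `g α x = (1 - s)³ / (2(1-α)x)² / 2`, so everything rests on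
these bounds for `1 - s`. -/
lemma one_sub_sqrt_bounds (hα : α ∈ Ico (0 : ℝ) 1) (hx : x ∈ Icc (0 : ℝ) 1) :
    2 * (1 - α) * x * (1 - x) ≤ 1 - √(1 - 4 * (1 - α) * x * (1 - x)) ∧
      1 - √(1 - 4 * (1 - α) * x * (1 - x)) ≤ 2 * (1 - α) * x ∧
      1 - √(1 - 4 * (1 - α) * x * (1 - x)) ≤ 1 - α := by
  obtain ⟨hα0, hα1⟩ := hα
  obtain ⟨hx0, hx1⟩ := hx
  set E := 4 * (1 - α) * x * (1 - x)
  have hE0 : 0 ≤ E := by positivity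
  have hE1 : (1 - 2 * x) ^ 2 ≤ 1 - E := by nlinarith
  have hE : 0 ≤ 1 - E := (sq_nonneg _).trans hE1
  set s := √(1 - E)
  have hs1 : s ≤ 1 := Real.sqrt_le_one.2 (by linarith)
  have hss : (1 - s) * (1 + s) = E := by
    have := Real.sq_sqrt hE; linear_combination -this
  have hs2x : 1 - 2 * x ≤ s := Real.le_sqrt_of_sq_le hE1
  have hsα : α ≤ s := Real.le_sqrt_of_sq_le (by nlinarith)
  refine ⟨by nlinarith, ?_, by linarith⟩
  rcases hx1.eq_or_lt with rfl | hx1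
  · linarith
  · nlinarith

lemma g_eq (hx : x ≠ 0) :
    g α x = (1 - √(1 - 4 * (1 - α) * x * (1 - x))) ^ 3 / (2 * (1 - α) * x) ^ 2 / 2 := by
  rw [g, if_neg hx, div_div]; ring_nf

lemma mul_one_sub_pow_le_g (hα : α ∈ Ico (0 : ℝ) 1) (hx : x ∈ Icc (0 : ℝ) 1) :
    (1 - α) * x * (1 - x) ^ 3 ≤ g α x := by
  rcases hx.1.eq_or_lt with rfl | hx0
  · simp [g_zero]
  have hα1 : 0 < 1 - α := by linarith [hα.2]
  rw [g_eq hx0.ne', le_div_iff₀ two_pos, le_div_iff₀ (by positivity)]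
  have h := pow_le_pow_left₀ (by have := hx.2; positivity) (one_sub_sqrt_bounds hα hx).1 3
  linear_combination h

lemma g_le_mul (hα : α ∈ Ico (0 : ℝ) 1) (hx : x ∈ Icc (0 : ℝ) 1) : g α x ≤ (1 - α) * x := by
  rcases hx.1.eq_or_lt with rfl | hx0
  · simp [g_zero]
  have hα1 : 0 < 1 - α := by linarith [hα.2]
  obtain ⟨hlow, hup, -⟩ := one_sub_sqrt_bounds hα hx
  have hs : 0 ≤ 1 - √(1 - 4 * (1 - α) * x * (1 - x)) := le_trans (by have := hx.2; positivity) hlow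
  rw [g_eq hx0.ne', div_le_iff₀ two_pos, div_le_iff₀ (by positivity)]
  nlinarith [pow_le_pow_left₀ hs hup 3]

lemma g_le_half (hα : α ∈ Ico (0 : ℝ) 1) (hx : x ∈ Icc (0 : ℝ) 1) : g α x ≤ (1 - α) / 2 := by
  rcases hx.1.eq_or_lt with rfl | hx0
  · simp [g_zero]; linarith [hα.2]
  have hα1 : 0 < 1 - α := by linarith [hα.2]
  obtain ⟨hlow, hup, hhalf⟩ := one_sub_sqrt_bounds hα hx
  have hs : 0 ≤ 1 - √(1 - 4 * (1 - α) * x * (1 - x)) := le_trans (by have := hx.2; positivity) hlow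
  rw [g_eq hx0.ne', div_le_div_iff_of_pos_right two_pos, div_le_iff₀ (by positivity)]
  nlinarith [pow_le_pow_left₀ hs hup 2, mul_le_mul hhalf (pow_le_pow_left₀ hs hup 2) (sq_nonneg _)
    hα1.le]

lemma g_nonneg (hα : α ∈ Ico (0 : ℝ) 1) (hx : x ∈ Icc (0 : ℝ) 1) : 0 ≤ g α x :=
  le_trans (by have := hα.2; have := hx.2; have := hx.1; positivity) (mul_one_sub_pow_le_g hα hx)

lemma mul_le_g {α x y z : ℝ} (hα : α ∈ Ico (0 : ℝ) 1) (hy : 0 ≤ y) (hyx : y ≤ x) (hxz : x ≤ z)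
    (hz : z ≤ 1) : (1 - α) * y * (1 - z) ^ 3 ≤ g α x := by
  have hα1 : 0 ≤ 1 - α := by linarith [hα.2]
  refine le_trans ?_ (mul_one_sub_pow_le_g hα ⟨hy.trans hyx, hxz.trans hz⟩)
  exact mul_le_mul (mul_le_mul_of_nonneg_left hyx hα1)
    (pow_le_pow_left₀ (by linarith) (by linarith) 3) (pow_nonneg (by linarith) 3)
    (mul_nonneg hα1 (hy.trans hyx))

end g

lemma continuousOn_g {α : ℝ} (hα : α ∈ Ico (0 : ℝ) 1) : ContinuousOn (g α) (Icc 0 1) := by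
  intro x hx
  rcases hx.1.eq_or_lt with rfl | hx0
  · have hlin : Tendsto (fun y => (1 - α) * y) (𝓝[Icc 0 1] 0) (𝓝 0) := by
      simpa using ((continuous_const_mul (1 - α)).tendsto 0).mono_left nhdsWithin_le_nhds
    rw [ContinuousWithinAt, g_zero]
    exact squeeze_zero' (eventually_nhdsWithin_of_forall fun y hy => g_nonneg hα hy)
      (eventually_nhdsWithin_of_forall fun y hy => g_le_mul hα hy) hlin
  · have hα1 : 0 < 1 - α := by linarith [hα.2]
    have hcont : ContinuousAt (fun y => (1 - √(1 - 4 * (1 - α) * y * (1 - y))) ^ 3 /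
        (2 * (1 - α) * y) ^ 2 / 2) x := by
      refine ((ContinuousAt.pow ?_ 3).div (by fun_prop) (by positivity)).div_const _
      exact continuousAt_const.sub (by fun_prop)
    exact (hcont.congr ((eventually_ne_nhds hx0.ne').mono
      fun y hy => (g_eq hy).symm)).continuousWithinAt

lemma g_le_pbar {α x : ℝ} (hα : α ∈ Ico (0 : ℝ) 1) (hx : x ∈ Icc (0 : ℝ) 1) :
    g α x ≤ pbar α :=
  le_csSup ⟨(1 - α) / 2, forall_mem_image.2 fun _ hy => g_le_half hα hy⟩ (mem_image_of_mem _ hx)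

lemma Icc_pbar_subset {α : ℝ} (hα : α ∈ Ico (0 : ℝ) 1) : Icc 0 (pbar α) ⊆ Icc 0 1 := by
  refine Icc_subset_Icc le_rfl (csSup_le ⟨g α 0, mem_image_of_mem _ (by simp)⟩ ?_)
  exact forall_mem_image.2 fun _ hy => (g_le_half hα hy).trans (by linarith [hα.1])

section tmap

variable {α₂ β₂ : ℝ}

lemma one_sub_exp_neg_mem_Icc {x : ℝ} (hx : 0 ≤ x) : 1 - exp (-x) ∈ Icc (0 : ℝ) 1 :=
  ⟨by linarith [exp_le_one_iff.2 (neg_nonpos.2 hx)], by linarith [exp_pos (-x)]⟩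

lemma mapsTo_tmap (hα₂ : α₂ ∈ Ico (0 : ℝ) 1) (hβ₂ : 0 < β₂) :
    MapsTo (tmap α₂ β₂) (Icc 0 1) (Icc 0 1) := fun x hx => by
  have hy := one_sub_exp_neg_mem_Icc (mul_nonneg hβ₂.le hx.1)
  exact ⟨g_nonneg hα₂ hy, (g_le_half hα₂ hy).trans (by linarith [hα₂.1])⟩

lemma continuousOn_tmap (hα₂ : α₂ ∈ Ico (0 : ℝ) 1) (hβ₂ : 0 < β₂) :
    ContinuousOn (tmap α₂ β₂) (Icc 0 1) :=
  (continuousOn_g hα₂).comp (by fun_prop) fun _ hx =>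
    one_sub_exp_neg_mem_Icc (mul_nonneg hβ₂.le hx.1)

noncomputable def psiProd (α₂ β₂ : ℝ) (n : ℕ) (x : ℝ) : ℝ :=
  ∏ k ∈ Finset.range n, psi (β₂ * (tmap α₂ β₂)^[k] x)

lemma psi_tmap_iterate_mem (hα₂ : α₂ ∈ Ico (0 : ℝ) 1) (hβ₂ : 0 < β₂) {x : ℝ}
    (hx : x ∈ Icc (0 : ℝ) 1) (k : ℕ) : psi (β₂ * (tmap α₂ β₂)^[k] x) ∈ Ioc (0 : ℝ) 1 := by
  have := mul_nonneg hβ₂.le ((mapsTo_tmap hα₂ hβ₂).iterate k hx).1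
  exact ⟨psi_pos this, psi_le_one this⟩

lemma psiProd_mem (hα₂ : α₂ ∈ Ico (0 : ℝ) 1) (hβ₂ : 0 < β₂) {x : ℝ} (hx : x ∈ Icc (0 : ℝ) 1)
    (n : ℕ) : psiProd α₂ β₂ n x ∈ Icc (0 : ℝ) 1 :=
  ⟨Finset.prod_nonneg fun k _ => (psi_tmap_iterate_mem hα₂ hβ₂ hx k).1.le,
    Finset.prod_le_one (fun k _ => (psi_tmap_iterate_mem hα₂ hβ₂ hx k).1.le)
      fun k _ => (psi_tmap_iterate_mem hα₂ hβ₂ hx k).2⟩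

lemma continuousOn_psiProd (hα₂ : α₂ ∈ Ico (0 : ℝ) 1) (hβ₂ : 0 < β₂) (n : ℕ) :
    ContinuousOn (psiProd α₂ β₂ n) (Icc 0 1) :=
  continuousOn_finsetProd _ fun k _ =>
    lipschitzOnWith_psi.continuousOn.comp
      (continuousOn_const.mul ((continuousOn_tmap hα₂ hβ₂).iterate (mapsTo_tmap hα₂ hβ₂) k))
      fun _ hx => mul_nonneg hβ₂.le ((mapsTo_tmap hα₂ hβ₂).iterate k hx).1

lemma sigma_le_liminf (hα₂ : α₂ ∈ Ico (0 : ℝ) 1) (hβ₂ : 0 < β₂) {x : ℝ}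
    (hx : x ∈ Icc 0 (pbar α₂)) :
    sigma α₂ β₂ ≤ liminf (fun n : ℕ => psiProd α₂ β₂ n x ^ (1 / (n : ℝ))) atTop := by
  refine csInf_le ⟨0, forall_mem_image.2 fun y hy => ?_⟩ (mem_image_of_mem _ hx)
  have hP := psiProd_mem hα₂ hβ₂ (Icc_pbar_subset hα₂ hy)
  exact le_liminf_of_le (isBoundedUnder_of ⟨1, fun n => rpow_le_one (hP n).1 (hP n).2
    (by positivity)⟩).isCoboundedUnder_ge (.of_forall fun n => rpow_nonneg (hP n).1 _)

end tmap

def posTriangle : Set (ℝ × ℝ) := {q | 0 < q.1 ∧ 0 < q.2 ∧ q.1 + q.2 ≤ 1}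

lemma snd_mem_Icc_of_mem_posTriangle {q : ℝ × ℝ} (hq : q ∈ posTriangle) :
    q.2 ∈ Icc (0 : ℝ) 1 :=
  ⟨hq.2.1.le, by linarith [hq.1, hq.2.2]⟩

lemma swap_mem_posTriangle {q : ℝ × ℝ} (hq : q ∈ posTriangle) : q.swap ∈ posTriangle :=
  ⟨hq.2.1, hq.1, by simpa [add_comm] using hq.2.2⟩

lemma hmap_snd_eq_fst_swap (α₁ α₂ β₁ β₂ : ℝ) (q : ℝ × ℝ) :
    (hmap α₁ α₂ β₁ β₂ q).2 = (hmap α₂ α₁ β₂ β₁ q.swap).1 := by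
  simp [hmap, f1, f2, Sig, add_comm]

section f1

variable {β₁ β₂ : ℝ} {q : ℝ × ℝ} (hβ₁ : 0 < β₁) (hβ₂ : 0 < β₂) (hq : q ∈ posTriangle)
include hβ₁ hβ₂ hq

lemma Sig_pos : 0 < Sig β₁ β₂ q := by
  have := hq.1; have := hq.2.1; unfold Sig; positivity

lemma f1_eq : f1 β₁ β₂ q = psi (Sig β₁ β₂ q) * (β₁ * q.1) := by
  have hS := Sig_pos hβ₁ hβ₂ hq
  rw [f1, if_neg hS.ne', psi_of_pos hS]; ring

lemma f1_nonneg : 0 ≤ f1 β₁ β₂ q := by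
  rw [f1_eq hβ₁ hβ₂ hq]; have := (psi_pos (Sig_pos hβ₁ hβ₂ hq).le).le; have := hq.1; positivity

lemma f1_le_one_sub_exp : f1 β₁ β₂ q ≤ 1 - exp (-(β₁ + β₂)) := by
  have hS := Sig_pos hβ₁ hβ₂ hq
  have hSle : Sig β₁ β₂ q ≤ β₁ + β₂ := by
    unfold Sig; nlinarith [hq.1, hq.2.1, hq.2.2]
  calc f1 β₁ β₂ q ≤ psi (Sig β₁ β₂ q) * Sig β₁ β₂ q := by
        rw [f1_eq hβ₁ hβ₂ hq]
        exact mul_le_mul_of_nonneg_left (by unfold Sig; nlinarith [hq.2.1]) (psi_pos hS.le).le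
    _ = 1 - exp (-Sig β₁ β₂ q) := by rw [mul_comm, mul_psi]
    _ ≤ 1 - exp (-(β₁ + β₂)) := by gcongr

lemma f1_mem_Icc : f1 β₁ β₂ q ∈ Icc (0 : ℝ) 1 :=
  ⟨f1_nonneg hβ₁ hβ₂ hq, (f1_le_one_sub_exp hβ₁ hβ₂ hq).trans (by linarith [exp_pos (-(β₁ + β₂))])⟩

lemma f1_le : f1 β₁ β₂ q ≤ β₁ * q.1 := by
  rw [f1_eq hβ₁ hβ₂ hq]
  exact mul_le_of_le_one_left (by have := hq.1; positivity) (psi_le_one (Sig_pos hβ₁ hβ₂ hq).le)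

lemma exp_mul_le_f1 : exp (-(β₁ + β₂)) * (β₁ * q.1) ≤ f1 β₁ β₂ q := by
  have hS := Sig_pos hβ₁ hβ₂ hq
  rw [f1_eq hβ₁ hβ₂ hq]
  refine mul_le_mul_of_nonneg_right (le_trans ?_ (exp_neg_le_psi hS.le))
    (by have := hq.1; positivity)
  gcongr; unfold Sig; nlinarith [hq.1, hq.2.1, hq.2.2]

lemma abs_psi_Sig_sub_le : |psi (Sig β₁ β₂ q) - psi (β₂ * q.2)| ≤ β₁ * q.1 := by
  have := hq.1
  simpa [Sig, abs_of_pos (mul_pos hβ₁ this)] using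
    abs_psi_sub_psi_le (Sig_pos hβ₁ hβ₂ hq).le (mul_nonneg hβ₂.le hq.2.1.le)

lemma sub_mul_le_f1 : (psi (β₂ * q.2) - β₁ * q.1) * (β₁ * q.1) ≤ f1 β₁ β₂ q := by
  rw [f1_eq hβ₁ hβ₂ hq]
  exact mul_le_mul_of_nonneg_right (by linarith [(abs_le.1 (abs_psi_Sig_sub_le hβ₁ hβ₂ hq)).1])
    (by have := hq.1; positivity)

lemma abs_f1_sub_le : |f1 β₁ β₂ q - (1 - exp (-(β₁ * q.1)))| ≤ β₁ * β₂ * q.2 := by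
  have h1 : 0 < β₁ * q.1 := mul_pos hβ₁ hq.1
  have h2 : 0 < β₂ * q.2 := mul_pos hβ₂ hq.2.1
  have hψ : |psi (Sig β₁ β₂ q) - psi (β₁ * q.1)| ≤ β₂ * q.2 := by
    simpa [Sig, abs_of_pos h2] using abs_psi_sub_psi_le (Sig_pos hβ₁ hβ₂ hq).le h1.le
  rw [f1_eq hβ₁ hβ₂ hq, ← mul_psi, mul_comm, ← mul_sub, abs_mul, abs_of_pos h1]
  calc β₁ * q.1 * |psi (Sig β₁ β₂ q) - psi (β₁ * q.1)| ≤ β₁ * q.1 * (β₂ * q.2) := by gcongr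
    _ ≤ β₁ * β₂ * q.2 := by
      have : q.1 ≤ 1 := by linarith [hq.2.1, hq.2.2]
      nlinarith [mul_pos (mul_pos hβ₁ hβ₂) hq.2.1]

end f1

section hmap

variable {α₁ α₂ β₁ β₂ : ℝ} {q : ℝ × ℝ} (hα₁ : α₁ ∈ Ico (0 : ℝ) 1) (hα₂ : α₂ ∈ Ico (0 : ℝ) 1)
  (hβ₁ : 0 < β₁) (hβ₂ : 0 < β₂) (hq : q ∈ posTriangle)

include hα₁ hβ₁ hβ₂ hq in
lemma mul_le_hmap_fst :
    (1 - α₁) * β₁ * exp (-(β₁ + β₂)) ^ 4 * q.1 ≤ (hmap α₁ α₂ β₁ β₂ q).1 := by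
  have h := mul_le_g hα₁ (by have := hq.1; positivity) (exp_mul_le_f1 hβ₁ hβ₂ hq)
    (f1_le_one_sub_exp hβ₁ hβ₂ hq) (by linarith [exp_pos (-(β₁ + β₂))])
  rw [sub_sub_cancel] at h
  exact le_of_eq_of_le (by ring) h

include hα₁ hβ₁ hβ₂ hq in
lemma hmap_fst_pos : 0 < (hmap α₁ α₂ β₁ β₂ q).1 := by
  have := hα₁.2; have := hq.1
  exact lt_of_lt_of_le (by positivity) (mul_le_hmap_fst (α₂ := α₂) hα₁ hβ₁ hβ₂ hq)

include hα₁ hβ₁ hβ₂ hq in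
lemma mul_sub_mul_le_hmap_fst :
    (1 - α₁) * β₁ * (psi (β₂ * q.2) - 4 * (β₁ * q.1)) * q.1 ≤ (hmap α₁ α₂ β₁ β₂ q).1 := by
  set P := psi (β₂ * q.2)
  set y := β₁ * q.1
  have hy : 0 < y := mul_pos hβ₁ hq.1
  have hP : P ∈ Ioc (0 : ℝ) 1 := by
    have := mul_nonneg hβ₂.le hq.2.1.le; exact ⟨psi_pos this, psi_le_one this⟩
  rcases le_or_gt (P - 4 * y) 0 with hneg | hpos
  · refine le_trans ?_ (hmap_fst_pos hα₁ hβ₁ hβ₂ hq).le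
    have := hα₁.2; have := hq.1
    exact mul_nonpos_of_nonpos_of_nonneg (mul_nonpos_of_nonneg_of_nonpos (by positivity) hneg)
      this.le
  · have hg := mul_le_g hα₁ (by nlinarith) (sub_mul_le_f1 hβ₁ hβ₂ hq) (f1_le hβ₁ hβ₂ hq)
      (by linarith [hP.2])
    have hy4 : y < 1 / 4 := by linarith [hP.2]
    have hpoly : P - 4 * y ≤ (P - y) * (1 - y) ^ 3 := by
      nlinarith [hP.1, hP.2,
        mul_nonneg (mul_nonneg hP.1.le (sq_nonneg y)) (by linarith : 0 ≤ 3 - y)]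
    have := hα₁.2
    calc (1 - α₁) * β₁ * (P - 4 * y) * q.1 = (1 - α₁) * y * (P - 4 * y) := by ring
      _ ≤ (1 - α₁) * y * ((P - y) * (1 - y) ^ 3) := by gcongr
      _ = (1 - α₁) * ((P - y) * y) * (1 - y) ^ 3 := by ring
      _ ≤ (hmap α₁ α₂ β₁ β₂ q).1 := hg

include hα₁ hβ₁ hβ₂ hq in
lemma mul_psi_le_hmap_fst {t η : ℝ} (ht : 0 ≤ t)
    (hsmall : β₂ * |q.2 - t| + 4 * (β₁ * q.1) ≤ η * psi (β₂ * t)) :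
    (1 - η) * ((1 - α₁) * β₁) * psi (β₂ * t) * q.1 ≤ (hmap α₁ α₂ β₁ β₂ q).1 := by
  have hlip : psi (β₂ * t) - psi (β₂ * q.2) ≤ β₂ * |q.2 - t| := by
    have := abs_psi_sub_psi_le (mul_nonneg hβ₂.le ht) (mul_nonneg hβ₂.le hq.2.1.le)
    rw [← mul_sub, abs_mul, abs_of_pos hβ₂, abs_sub_comm t] at this
    exact (le_abs_self _).trans this
  have := hα₁.2; have := hq.1
  calc (1 - η) * ((1 - α₁) * β₁) * psi (β₂ * t) * q.1
      = (1 - α₁) * β₁ * ((1 - η) * psi (β₂ * t)) * q.1 := by ring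
    _ ≤ (1 - α₁) * β₁ * (psi (β₂ * q.2) - 4 * (β₁ * q.1)) * q.1 := by gcongr; linarith
    _ ≤ (hmap α₁ α₂ β₁ β₂ q).1 := mul_sub_mul_le_hmap_fst hα₁ hβ₁ hβ₂ hq

include hα₁ hβ₁ hβ₂ hq in
lemma hmap_fst_le_half : (hmap α₁ α₂ β₁ β₂ q).1 ≤ (1 - α₁) / 2 :=
  g_le_half hα₁ (f1_mem_Icc hβ₁ hβ₂ hq)

include hα₂ hβ₁ hβ₂ hq in
lemma hmap_snd_le_pbar : (hmap α₁ α₂ β₁ β₂ q).2 ≤ pbar α₂ := by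
  rw [hmap_snd_eq_fst_swap]
  exact g_le_pbar hα₂ (f1_mem_Icc hβ₂ hβ₁ (swap_mem_posTriangle hq))

include hα₂ hβ₁ hβ₂ hq in
lemma mul_le_hmap_snd :
    (1 - α₂) * β₂ * exp (-(β₁ + β₂)) ^ 4 * q.2 ≤ (hmap α₁ α₂ β₁ β₂ q).2 := by
  rw [hmap_snd_eq_fst_swap, add_comm]
  exact mul_le_hmap_fst hα₂ hβ₂ hβ₁ (swap_mem_posTriangle hq)

include hα₂ hβ₁ hβ₂ hq in
lemma mul_sub_mul_le_hmap_snd :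
    (1 - α₂) * β₂ * (psi (β₁ * q.1) - 4 * (β₂ * q.2)) * q.2 ≤ (hmap α₁ α₂ β₁ β₂ q).2 := by
  rw [hmap_snd_eq_fst_swap]
  exact mul_sub_mul_le_hmap_fst hα₂ hβ₂ hβ₁ (swap_mem_posTriangle hq)

include hα₁ hα₂ hβ₁ hβ₂ hq in
lemma hmap_mem_posTriangle : hmap α₁ α₂ β₁ β₂ q ∈ posTriangle := by
  have h1 := hmap_fst_le_half (α₂ := α₂) hα₁ hβ₁ hβ₂ hq
  have h2 : (hmap α₁ α₂ β₁ β₂ q).2 ≤ (1 - α₂) / 2 := by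
    rw [hmap_snd_eq_fst_swap]; exact hmap_fst_le_half hα₂ hβ₂ hβ₁ (swap_mem_posTriangle hq)
  refine ⟨hmap_fst_pos hα₁ hβ₁ hβ₂ hq, ?_, by linarith [hα₁.1, hα₂.1]⟩
  rw [hmap_snd_eq_fst_swap]; exact hmap_fst_pos hα₂ hβ₂ hβ₁ (swap_mem_posTriangle hq)

end hmap

lemma mapsTo_hmap {α₁ α₂ β₁ β₂ : ℝ} (hα₁ : α₁ ∈ Ico (0 : ℝ) 1) (hα₂ : α₂ ∈ Ico (0 : ℝ) 1)
    (hβ₁ : 0 < β₁) (hβ₂ : 0 < β₂) : MapsTo (hmap α₁ α₂ β₁ β₂) posTriangle posTriangle :=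
  fun _ hq => hmap_mem_posTriangle hα₁ hα₂ hβ₁ hβ₂ hq

lemma exists_dist_hmap_snd_tmap_lt {α₁ α₂ β₁ β₂ : ℝ} (hα₂ : α₂ ∈ Ico (0 : ℝ) 1)
    (hβ₁ : 0 < β₁) (hβ₂ : 0 < β₂) {ε : ℝ} (hε : 0 < ε) :
    ∃ δ > 0, ∀ q ∈ posTriangle, q.1 < δ → dist (hmap α₁ α₂ β₁ β₂ q).2 (tmap α₂ β₂ q.2) < ε := by
  obtain ⟨δ, hδ, hg⟩ := Metric.uniformContinuousOn_iff.1
    (isCompact_Icc.uniformContinuousOn_of_continuous (continuousOn_g hα₂)) ε hε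
  refine ⟨δ / (β₁ * β₂), by positivity, fun q hq hq1 => ?_⟩
  have hq' := swap_mem_posTriangle hq
  rw [hmap_snd_eq_fst_swap]
  refine hg _ (f1_mem_Icc hβ₂ hβ₁ hq') _ (one_sub_exp_neg_mem_Icc (mul_nonneg hβ₂.le hq.2.1.le)) ?_
  rw [Real.dist_eq]
  calc _ ≤ β₂ * β₁ * q.swap.2 := abs_f1_sub_le hβ₂ hβ₁ hq'
    _ < β₂ * β₁ * (δ / (β₁ * β₂)) := by rw [Prod.snd_swap]; gcongr
    _ = δ := by field_simp

lemma one_lt_mul_psi_half {φ : ℝ} (hφ : 2 * log 2 < φ) : 1 < φ * psi (φ / 2) := by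
  have hexp : exp (-(φ / 2)) < 1 / 2 :=
    calc exp (-(φ / 2)) < exp (-log 2) := exp_lt_exp.2 (by linarith)
      _ = 1 / 2 := by rw [exp_neg, exp_log two_pos, one_div]
  have := mul_psi (φ / 2)
  linarith

lemma liminf_hmap_snd_pos {α₁ α₂ β₁ β₂ : ℝ} (hα₁ : α₁ ∈ Ico (0 : ℝ) 1)
    (hα₂ : α₂ ∈ Ico (0 : ℝ) 1) (hβ₁ : 0 < β₁) (hβ₂ : 0 < β₂)
    (hφ₁₂ : (1 - α₁) * β₁ < (1 - α₂) * β₂) (hφ₂ : 2 * log 2 < (1 - α₂) * β₂)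
    {p : ℝ × ℝ} (hp : p ∈ posTriangle) :
    0 < liminf (fun k : ℕ => ((hmap α₁ α₂ β₁ β₂)^[k] p).2) atTop := by
  set x := fun k => (hmap α₁ α₂ β₁ β₂)^[k] p
  have hx k : x k ∈ posTriangle := (mapsTo_hmap hα₁ hα₂ hβ₁ hβ₂).iterate k hp
  have hsucc k : x (k + 1) = hmap α₁ α₂ β₁ β₂ (x k) := Function.iterate_succ_apply' _ _ _
  set φ₂ := (1 - α₂) * β₂
  have hφ₂0 : 0 < φ₂ := mul_pos (by linarith [hα₂.2]) hβ₂
  set κ := φ₂ * psi (φ₂ / 2)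
  have hκ : 1 < κ := one_lt_mul_psi_half hφ₂
  set δ := (κ - 1) / (4 * φ₂ * β₂)
  set r := φ₂ * exp (-(β₁ + β₂)) ^ 4
  have hgrow k : (x (k + 1)).2 ≤ δ → (x (k + 1)).2 ≤ (x (k + 1 + 1)).2 := by
    intro hsmall
    have ha : β₁ * (x (k + 1)).1 ≤ φ₂ / 2 := by
      have := hmap_fst_le_half (α₂ := α₂) hα₁ hβ₁ hβ₂ (hx k)
      rw [← hsucc] at this
      nlinarith
    have hψ : psi (φ₂ / 2) ≤ psi (β₁ * (x (k + 1)).1) :=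
      psi_antitoneOn (mul_nonneg hβ₁.le (hx (k + 1)).1.le) (by simp; positivity) ha
    have hfactor : 1 ≤ φ₂ * (psi (β₁ * (x (k + 1)).1) - 4 * (β₂ * (x (k + 1)).2)) := by
      have : φ₂ * (4 * (β₂ * (x (k + 1)).2)) ≤ κ - 1 := by
        have := mul_le_mul_of_nonneg_left hsmall (by positivity : 0 ≤ 4 * φ₂ * β₂)
        rw [mul_div_cancel₀ _ (by positivity)] at this
        linarith
      nlinarith
    rw [hsucc (k + 1)]
    exact le_trans (le_mul_of_one_le_left (hx (k + 1)).2.1.le hfactor)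
      (le_of_eq_of_le (by ring) (mul_sub_mul_le_hmap_snd hα₂ hβ₁ hβ₂ (hx (k + 1))))
  have hratio k : r * (x (k + 1)).2 ≤ (x (k + 1 + 1)).2 := by
    rw [hsucc (k + 1)]
    exact le_of_eq_of_le (by ring) (mul_le_hmap_snd hα₂ hβ₁ hβ₂ (hx (k + 1)))
  have hmin := min_le_of_le_succ_of_mul_le_succ (u := fun k => (x (k + 1)).2) (by positivity)
    hgrow hratio
  exact liminf_pos_of_le_succ (c := min (x 1).2 (r * δ)) (lt_min (hx 1).2.1 (by positivity))
    (B := 1) (fun k => by linarith [(hx k).1, (hx k).2.2]) hmin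

lemma exists_forall_pow_lt_psiProd {α₂ β₂ θ : ℝ} (hα₂ : α₂ ∈ Ico (0 : ℝ) 1) (hβ₂ : 0 < β₂)
    (hθ0 : 0 ≤ θ) (hθ : θ < sigma α₂ β₂) :
    ∃ N, ∀ y ∈ Icc 0 (pbar α₂), ∃ n ≤ N, θ ^ (n + 1) < psiProd α₂ β₂ (n + 1) y :=
  isCompact_Icc.exists_forall_exists_le_lt
    (fun n => (continuousOn_psiProd hα₂ hβ₂ (n + 1)).mono (Icc_pbar_subset hα₂)) fun _ hy =>
    exists_pow_lt_of_lt_liminf_rpow (fun n => (psiProd_mem hα₂ hβ₂ (Icc_pbar_subset hα₂ hy) n).1)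
      hθ0 (hθ.trans_le (sigma_le_liminf hα₂ hβ₂ hy))

section block

variable {α₁ α₂ β₁ β₂ : ℝ} (hα₁ : α₁ ∈ Ico (0 : ℝ) 1) (hα₂ : α₂ ∈ Ico (0 : ℝ) 1)
  (hβ₁ : 0 < β₁) (hβ₂ : 0 < β₂)
include hα₁ hα₂ hβ₁ hβ₂

lemma exists_mul_prod_le_hmap_iterate_fst (N : ℕ) {η : ℝ} (hη0 : 0 < η) (hη1 : η ≤ 1) :
    ∃ δ > 0, ∀ q ∈ posTriangle, ∀ n ≤ N, (∀ j < n, ((hmap α₁ α₂ β₁ β₂)^[j] q).1 < δ) →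
      q.1 * ∏ j ∈ Finset.range n, ((1 - η) * ((1 - α₁) * β₁) * psi (β₂ * (tmap α₂ β₂)^[j] q.2))
        ≤ ((hmap α₁ α₂ β₁ β₂)^[n] q).1 := by
  set μ := exp (-β₂)
  obtain ⟨δsh, hδsh, hshadow⟩ := UniformContinuousOn.exists_dist_iterate_lt
    (isCompact_Icc.uniformContinuousOn_of_continuous (continuousOn_tmap hα₂ hβ₂))
    (mapsTo_tmap hα₂ hβ₂) N (ε := η * μ / (2 * β₂)) (by positivity)
  obtain ⟨δst, hδst, hstep⟩ := exists_dist_hmap_snd_tmap_lt (α₁ := α₁) hα₂ hβ₁ hβ₂ hδsh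
  refine ⟨min δst (η * μ / (8 * β₁)), by positivity, fun q hq n hn hsmall => ?_⟩
  set x := fun j => (hmap α₁ α₂ β₁ β₂)^[j] q
  have hx j : x j ∈ posTriangle := (mapsTo_hmap hα₁ hα₂ hβ₁ hβ₂).iterate j hq
  have hsucc j : x (j + 1) = hmap α₁ α₂ β₁ β₂ (x j) := Function.iterate_succ_apply' _ _ _
  have hclose j (hj : j < n) : |(x j).2 - (tmap α₂ β₂)^[j] q.2| < η * μ / (2 * β₂) := by
    refine hshadow (fun j => (x j).2) (fun j => snd_mem_Icc_of_mem_posTriangle (hx j)) j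
      (by omega) fun i hi => ?_
    rw [hsucc]
    exact hstep _ (hx i) ((hsmall i (by omega)).trans_le (min_le_left _ _))
  refine mul_prod_le_of_mul_le_succ (u := fun j => (x j).1) (fun j _ => ?_) fun j hj => ?_
  · have hψ := (psi_tmap_iterate_mem hα₂ hβ₂ (snd_mem_Icc_of_mem_posTriangle hq) j).1
    have := hα₁.2
    exact mul_nonneg (mul_nonneg (by linarith) (by positivity)) hψ.le
  have ht : (tmap α₂ β₂)^[j] q.2 ∈ Icc (0 : ℝ) 1 :=
    (mapsTo_tmap hα₂ hβ₂).iterate j (snd_mem_Icc_of_mem_posTriangle hq)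
  have hμ : μ ≤ psi (β₂ * (tmap α₂ β₂)^[j] q.2) :=
    (exp_le_exp.2 (by nlinarith [ht.2])).trans (exp_neg_le_psi (mul_nonneg hβ₂.le ht.1))
  have hb : β₂ * |(x j).2 - (tmap α₂ β₂)^[j] q.2| ≤ η * μ / 2 := by
    have := (hclose j hj).le
    rw [le_div_iff₀ (by positivity)] at this
    linarith
  have ha : 4 * (β₁ * (x j).1) ≤ η * μ / 2 := by
    have := (hsmall j hj).le.trans (min_le_right _ _)
    rw [le_div_iff₀ (by positivity)] at this
    linarith
  rw [hsucc]
  exact mul_psi_le_hmap_fst hα₁ hβ₁ hβ₂ (hx j) ht.1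
    (by nlinarith [mul_le_mul_of_nonneg_left hμ hη0.le])

end block

section fst

variable {α₁ α₂ β₁ β₂ : ℝ} (hα₁ : α₁ ∈ Ico (0 : ℝ) 1) (hα₂ : α₂ ∈ Ico (0 : ℝ) 1)
  (hβ₁ : 0 < β₁) (hβ₂ : 0 < β₂) (hσ : 1 < (1 - α₁) * β₁ * sigma α₂ β₂)
include hα₁ hα₂ hβ₁ hβ₂ hσ

lemma exists_le_hmap_iterate_fst_or_le :
    ∃ N, ∃ δ > 0, ∀ q ∈ posTriangle, q.2 ≤ pbar α₂ →
      (∃ n, 0 < n ∧ n ≤ N ∧ q.1 ≤ ((hmap α₁ α₂ β₁ β₂)^[n] q).1) ∨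
        ∃ j < N, δ ≤ ((hmap α₁ α₂ β₁ β₂)^[j] q).1 := by
  set φ₁ := (1 - α₁) * β₁
  have hφ₁ : 0 < φ₁ := mul_pos (by linarith [hα₁.2]) hβ₁
  obtain ⟨θ, hθφ, hθσ⟩ := exists_between ((inv_lt_iff_one_lt_mul₀' hφ₁).2 hσ)
  have hθ : 0 < θ := (inv_pos.2 hφ₁).trans hθφ
  have hφθ : 1 < φ₁ * θ := (inv_lt_iff_one_lt_mul₀' hφ₁).1 hθφ
  obtain ⟨N, hN⟩ := exists_forall_pow_lt_psiProd hα₂ hβ₂ hθ.le hθσ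
  obtain ⟨δ, hδ, hblock⟩ := exists_mul_prod_le_hmap_iterate_fst hα₁ hα₂ hβ₁ hβ₂ (N + 1)
    (η := 1 - (φ₁ * θ)⁻¹) (sub_pos.2 (inv_lt_one_of_one_lt₀ hφθ))
    (sub_le_self _ (by positivity))
  refine ⟨N + 1, δ, hδ, fun q hq hq2 => ?_⟩
  obtain ⟨n, hnN, hprod⟩ := hN q.2 ⟨hq.2.1.le, hq2⟩
  by_cases hsmall : ∀ j < n + 1, ((hmap α₁ α₂ β₁ β₂)^[j] q).1 < δ
  · refine .inl ⟨n + 1, n.succ_pos, by omega, le_trans ?_ (hblock q hq (n + 1) (by omega) hsmall)⟩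
    rw [Finset.prod_mul_distrib, Finset.prod_const, Finset.card_range, sub_sub_cancel]
    refine le_mul_of_one_le_right hq.1.le ?_
    calc (1 : ℝ) = ((φ₁ * θ)⁻¹ * φ₁) ^ (n + 1) * θ ^ (n + 1) := by
          rw [← mul_pow, mul_assoc, inv_mul_cancel₀ (by positivity), one_pow]
      _ ≤ ((φ₁ * θ)⁻¹ * φ₁) ^ (n + 1) * psiProd α₂ β₂ (n + 1) q.2 := by gcongr
  · push Not at hsmall
    obtain ⟨j, hj, hδj⟩ := hsmall
    exact .inr ⟨j, by omega, hδj⟩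

lemma liminf_hmap_fst_pos {p : ℝ × ℝ} (hp : p ∈ posTriangle) :
    0 < liminf (fun k : ℕ => ((hmap α₁ α₂ β₁ β₂)^[k] p).1) atTop := by
  obtain ⟨N, δ, hδ, hret⟩ := exists_le_hmap_iterate_fst_or_le hα₁ hα₂ hβ₁ hβ₂ hσ
  set x := fun k => (hmap α₁ α₂ β₁ β₂)^[k] p
  have hx k : x k ∈ posTriangle := (mapsTo_hmap hα₁ hα₂ hβ₁ hβ₂).iterate k hp
  have hshift k n : (hmap α₁ α₂ β₁ β₂)^[n] (x (k + 1)) = x (k + n + 1) := by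
    simp only [x, ← Function.iterate_add_apply]; congr 1; omega
  set r := min ((1 - α₁) * β₁ * exp (-(β₁ + β₂)) ^ 4) 1
  have hr : 0 < r := lt_min (by have := hα₁.2; positivity) one_pos
  have hratio k : r * (x (k + 1)).1 ≤ (x (k + 1 + 1)).1 := by
    rw [show x (k + 1 + 1) = hmap α₁ α₂ β₁ β₂ (x (k + 1)) from Function.iterate_succ_apply' _ _ _]
    exact (mul_le_mul_of_nonneg_right (min_le_left _ _) (hx _).1.le).trans
      (mul_le_hmap_fst hα₁ hβ₁ hβ₂ (hx _))
  set m := min (x 1).1 (r * δ)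
  have hm : 0 < m := lt_min (hx 1).1 (by positivity)
  have hreturn k (hk : m ≤ (x (k + 1)).1) : ∃ n, 0 < n ∧ n ≤ N ∧ m ≤ (x (k + n + 1)).1 := by
    have hq2 : (x (k + 1)).2 ≤ pbar α₂ := by
      rw [show x (k + 1) = hmap α₁ α₂ β₁ β₂ (x k) from Function.iterate_succ_apply' _ _ _]
      exact hmap_snd_le_pbar hα₂ hβ₁ hβ₂ (hx k)
    rcases hret _ (hx (k + 1)) hq2 with ⟨n, hn0, hnN, hgrow⟩ | ⟨j, hjN, hδj⟩
    · exact ⟨n, hn0, hnN, hk.trans (hshift k n ▸ hgrow)⟩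
    · refine ⟨j + 1, j.succ_pos, hjN, ?_⟩
      rw [hshift] at hδj
      calc m ≤ r * δ := min_le_right _ _
        _ ≤ r * (x (k + j + 1)).1 := mul_le_mul_of_nonneg_left hδj hr.le
        _ ≤ (x (k + (j + 1) + 1)).1 := hratio (k + j)
  have hlow := pow_mul_le_of_forall_exists_le (u := fun k => (x (k + 1)).1) hr.le
    (min_le_right _ _) hm.le hratio hreturn (min_le_left _ _)
  exact liminf_pos_of_le_succ (by positivity) (B := 1)
    (fun k => by linarith [(hx k).2.1, (hx k).2.2]) hlow

end fst

theorem stmt15_general (α₁ α₂ β₁ β₂ : ℝ)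
    (hα₁ : α₁ ∈ Set.Ico (0 : ℝ) 1) (hα₂ : α₂ ∈ Set.Ico (0 : ℝ) 1)
    (hβ₁ : 0 < β₁) (hβ₂ : 0 < β₂)
    (hφ₁₂ : (1 - α₁) * β₁ < (1 - α₂) * β₂)
    (hφ₂ : 2 * Real.log 2 < (1 - α₂) * β₂)
    (hσ : 1 < (1 - α₁) * β₁ * sigma α₂ β₂) :
    ∀ p : ℝ × ℝ, p.1 ∈ Set.Ioo (0 : ℝ) 1 → p.2 ∈ Set.Ioo (0 : ℝ) 1 → p.1 + p.2 ≤ 1 →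
      0 < Filter.liminf (fun k : ℕ => ((hmap α₁ α₂ β₁ β₂)^[k] p).1) Filter.atTop ∧
      0 < Filter.liminf (fun k : ℕ => ((hmap α₁ α₂ β₁ β₂)^[k] p).2) Filter.atTop := by
  intro p hp₁ hp₂ hsum
  have hp : p ∈ posTriangle := ⟨hp₁.1, hp₂.1, hsum⟩
  exact ⟨liminf_hmap_fst_pos hα₁ hα₂ hβ₁ hβ₂ hσ hp,
    liminf_hmap_snd_pos hα₁ hα₂ hβ₁ hβ₂ hφ₁₂ hφ₂ hp⟩

theorem stmt15 (α₁ α₂ β₁ β₂ : ℝ)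
    (hα₁ : α₁ ∈ Set.Ico (0 : ℝ) 1) (hα₂ : α₂ ∈ Set.Ico (0 : ℝ) 1)
    (hβ₁ : 0 < β₁) (hβ₂ : 0 < β₂)
    (hφ₁ : 1 < (1 - α₁) * β₁) (hφ₁₂ : (1 - α₁) * β₁ < (1 - α₂) * β₂)
    (hφ₂ : 2 * Real.log 2 < (1 - α₂) * β₂)
    (hσ : 1 < (1 - α₁) * β₁ * sigma α₂ β₂) :
    ∀ p : ℝ × ℝ, p.1 ∈ Set.Ioo (0 : ℝ) 1 → p.2 ∈ Set.Ioo (0 : ℝ) 1 → p.1 + p.2 ≤ 1 →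
      0 < Filter.liminf (fun k : ℕ => ((hmap α₁ α₂ β₁ β₂)^[k] p).1) Filter.atTop ∧
      0 < Filter.liminf (fun k : ℕ => ((hmap α₁ α₂ β₁ β₂)^[k] p).2) Filter.atTop :=
  stmt15_general α₁ α₂ β₁ β₂ hα₁ hα₂ hβ₁ hβ₂ hφ₁₂ hφ₂ hσ
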